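/- Let ε > 0 and let η : ℤ² → ℝ satisfy (H₀): inf_n η(n) > −1 and η(n) → 0 as |n| → ∞, together with (H₁): sup_{n∈ℤ²} Λ(n)^ε ⟨n₁⟩ |η(n₁,n₂) − η(n₁+1,n₂)| < ∞, (H₂): sup_n Λ(n)^ε ⟨n₂⟩ |η(n₁,n₂) − η(n₁,n₂+1)| < ∞, (H₃): sup_n Λ(n)^ε ⟨n₁−n₂⟩ |η(n₁,n₂) − η(n₁+1,n₂−1)| < ∞, and (H₄): sup_n Λ(n)^ε |η(n)| < ∞; set m := 1 + η and D := Δ_T − Δ̃. Then there exists c > 0 such that for every finitely supported f : ℤ² → ℂ, Σ_{n∈ℤ²} Λ(n)^{2ε} |(D(A f))(n) − (A(D f))(n)|² ≤ c · Σ_{n∈ℤ²} |f(n)|²; i.e., Λ^{ε}(Q)[Δ_T − Δ̃, A] extends to a bounded operator on ℓ²(ℤ²,ℂ). -/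

import Mathlib

open scoped ENNReal
open Filter

noncomputable section

/-- The Hilbert space `ℓ²(ℤ², ℂ)`. -/
abbrev H2 : Type := lp (fun _ : ℤ × ℤ => ℂ) 2

/-- The triangular-lattice Laplacian, acting pointwise on functions `ℤ² → ℂ`. -/
def lapT (f : ℤ × ℤ → ℂ) : ℤ × ℤ → ℂ := fun n =>
  (1/6 : ℂ) * (f (n.1 + 1, n.2) + f (n.1 - 1, n.2) + f (n.1, n.2 + 1)
    + f (n.1, n.2 - 1) + f (n.1 + 1, n.2 - 1) + f (n.1 - 1, n.2 + 1))

/-- The symbol `F(x₁,x₂) = (1/3)(cos x₁ + cos x₂ + cos (x₁ - x₂))`. -/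
def symbF (x : ℝ × ℝ) : ℝ := (1/3) * (Real.cos x.1 + Real.cos x.2 + Real.cos (x.1 - x.2))

/-- `∂₁ F`. -/
def d1F (x : ℝ × ℝ) : ℝ := -(1/3) * (Real.sin x.1 + Real.sin (x.1 - x.2))

/-- `∂₂ F`. -/
def d2F (x : ℝ × ℝ) : ℝ := -(1/3) * (Real.sin x.2 - Real.sin (x.1 - x.2))

/-- Japanese bracket `⟨t⟩ = √(1/2 + t²)`. -/
def jap (t : ℝ) : ℝ := Real.sqrt (1/2 + t^2)

/-- The weight `Λ(n₁,n₂) = ⟨n₁⟩ + ⟨n₂⟩`. -/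
def Lam (n : ℤ × ℤ) : ℝ := jap (n.1 : ℝ) + jap (n.2 : ℝ)

/-- The conjugate operator `A`, acting pointwise on functions `ℤ² → ℂ`. -/
def opA (f : ℤ × ℤ → ℂ) : ℤ × ℤ → ℂ := fun n =>
  (Complex.I / 6) *
    (((n.1 : ℂ) + 1/2) * f (n.1 + 1, n.2) - ((n.1 : ℂ) - 1/2) * f (n.1 - 1, n.2)
      + ((n.2 : ℂ) + 1/2) * f (n.1, n.2 + 1) - ((n.2 : ℂ) - 1/2) * f (n.1, n.2 - 1)
      + ((n.2 : ℂ) - (n.1 : ℂ) + 1) * f (n.1 - 1, n.2 + 1)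
      + ((n.1 : ℂ) - (n.2 : ℂ) + 1) * f (n.1 + 1, n.2 - 1))

/-- The perturbed Laplacian `Δ̃` with weight `m`, acting pointwise on functions `ℤ² → ℂ`:
`(Δ̃ f)(n) = (1/6) Σ_{l ∼ n} f(l) / (√(m n) √(m l))`. -/
def lapPert (m : ℤ × ℤ → ℝ) (f : ℤ × ℤ → ℂ) : ℤ × ℤ → ℂ := fun n =>
  (1/6 : ℂ) *
    (f (n.1 + 1, n.2) / ((Real.sqrt (m n) * Real.sqrt (m (n.1 + 1, n.2)) : ℝ) : ℂ)
      + f (n.1 - 1, n.2) / ((Real.sqrt (m n) * Real.sqrt (m (n.1 - 1, n.2)) : ℝ) : ℂ)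
      + f (n.1, n.2 + 1) / ((Real.sqrt (m n) * Real.sqrt (m (n.1, n.2 + 1)) : ℝ) : ℂ)
      + f (n.1, n.2 - 1) / ((Real.sqrt (m n) * Real.sqrt (m (n.1, n.2 - 1)) : ℝ) : ℂ)
      + f (n.1 + 1, n.2 - 1) / ((Real.sqrt (m n) * Real.sqrt (m (n.1 + 1, n.2 - 1)) : ℝ) : ℂ)
      + f (n.1 - 1, n.2 + 1) / ((Real.sqrt (m n) * Real.sqrt (m (n.1 - 1, n.2 + 1)) : ℝ) : ℂ))

/-!
Write `s = m^{-1/2}`. Then `Δ_T - Δ̃` is the nearest-neighbour operator with bond coefficients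
`1 - s(a) s(b)`, and `A` is the nearest-neighbour operator whose coefficient on a bond is the signed
coordinate of the bond's midpoint along it. Hence `[Δ_T - Δ̃, A]` is a finite sum of shifts
`f ↦ c · f(· + v)`, and by a discrete Leibniz rule each coefficient `c` is a sum of products of
* a bounded difference of `A`-coefficients with a bond coefficient `1 - s(a) s(b) = O(|η|)`, or
* an `A`-coefficient, of size `⟨coordinate⟩`, with a difference `O(|η(a) - η(b)|)` of `s` along
  a bond.
Hypotheses (H₁)–(H₄) make each of these `O(Λ^{-ε})`, also after a fixed shift, since
`Λ(n + v) ≍ Λ(n)`. A shift whose coefficient is `O(Λ^{-ε})` maps `ℓ²` into `Λ^{-ε} ℓ²`.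
-/

open Asymptotics

lemma jap_pos (t : ℝ) : 0 < jap t := Real.sqrt_pos.2 (by positivity)

lemma jap_neg (t : ℝ) : jap (-t) = jap t := by simp [jap]

lemma abs_le_jap (t : ℝ) : |t| ≤ jap t := by
  rw [← Real.sqrt_sq_eq_abs]
  exact Real.sqrt_le_sqrt (by linarith)

lemma half_le_jap (t : ℝ) : 1 / 2 ≤ jap t :=
  (Real.le_sqrt (by norm_num) (by positivity)).2 (by nlinarith [sq_nonneg t])

lemma jap_le_jap_add_abs_sub (s t : ℝ) : jap s ≤ jap t + |s - t| := by
  have ht : jap t ^ 2 = 1 / 2 + t ^ 2 := Real.sq_sqrt (by positivity)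
  refine (Real.sqrt_le_left (add_nonneg (jap_pos t).le (abs_nonneg _))).2 ?_
  nlinarith [abs_le_jap t, abs_nonneg (s - t), sq_abs (s - t), le_abs_self (t * (s - t)),
    abs_mul t (s - t), mul_le_mul_of_nonneg_right (abs_le_jap t) (abs_nonneg (s - t))]

lemma jap_le_mul_jap (s t : ℝ) : jap s ≤ (1 + 2 * |s - t|) * jap t := by
  nlinarith [jap_le_jap_add_abs_sub s t, half_le_jap t, abs_nonneg (s - t)]

lemma Lam_pos (n : ℤ × ℤ) : 0 < Lam n := add_pos (jap_pos _) (jap_pos _)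

lemma Lam_le_mul_Lam_add (n v : ℤ × ℤ) :
    Lam n ≤ (1 + 2 * (|(v.1 : ℝ)| + |(v.2 : ℝ)|)) * Lam (n + v) := by
  have h1 := jap_le_mul_jap (n.1 : ℝ) ((n + v).1 : ℝ)
  have h2 := jap_le_mul_jap (n.2 : ℝ) ((n + v).2 : ℝ)
  simp only [Prod.fst_add, Prod.snd_add, Int.cast_add, sub_add_cancel_left, abs_neg] at h1 h2
  simp only [Lam, Prod.fst_add, Prod.snd_add, Int.cast_add]
  nlinarith [jap_pos ((n.1 : ℝ) + v.1), jap_pos ((n.2 : ℝ) + v.2), abs_nonneg (v.1 : ℝ),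
    abs_nonneg (v.2 : ℝ)]

lemma rpow_le_rpow_abs_mul_rpow {x y K : ℝ} (hx : 0 < x) (hy : 0 < y) (hxy : x ≤ K * y)
    (hyx : y ≤ K * x) (ε : ℝ) : x ^ ε ≤ K ^ |ε| * y ^ ε := by
  have hK : 0 < K := pos_of_mul_pos_left (hx.trans_le hxy) hy.le
  rcases le_total 0 ε with hε | hε
  · rw [abs_of_nonneg hε, ← Real.mul_rpow hK.le hy.le]
    exact Real.rpow_le_rpow hx.le hxy hε
  · rw [abs_of_nonpos hε, Real.rpow_neg hK.le, ← div_eq_inv_mul, ← Real.div_rpow hy.le hK.le]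
    exact Real.rpow_le_rpow_of_nonpos (div_pos hy hK) ((div_le_iff₀' hK).2 hyx) hε

lemma isBigO_Lam_rpow_neg_iff {E : Type*} [SeminormedAddCommGroup E] {ε : ℝ}
    {g : ℤ × ℤ → E} :
    g =O[⊤] (fun n => Lam n ^ (-ε)) ↔ ∃ C, ∀ n, Lam n ^ ε * ‖g n‖ ≤ C := by
  have key : ∀ n C, ‖g n‖ ≤ C * ‖Lam n ^ (-ε)‖ ↔ Lam n ^ ε * ‖g n‖ ≤ C := fun n C => by
    have hp := Real.rpow_pos_of_pos (Lam_pos n) ε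
    rw [Real.rpow_neg (Lam_pos n).le, Real.norm_of_nonneg (inv_pos.2 hp).le, ← div_eq_mul_inv,
      le_div_iff₀ hp, mul_comm]
  simp_rw [isBigO_top, key]

lemma isBigO_Lam_rpow_neg_comp_add (ε : ℝ) (v : ℤ × ℤ) :
    (fun n => Lam (n + v) ^ (-ε)) =O[⊤] fun n => Lam n ^ (-ε) := by
  refine IsBigO.of_bound ((1 + 2 * (|(v.1 : ℝ)| + |(v.2 : ℝ)|)) ^ |-ε|)
    (Eventually.of_forall fun n => ?_)
  rw [Real.norm_of_nonneg (Real.rpow_nonneg (Lam_pos _).le _),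
    Real.norm_of_nonneg (Real.rpow_nonneg (Lam_pos _).le _)]
  refine rpow_le_rpow_abs_mul_rpow (Lam_pos _) (Lam_pos _) ?_ (Lam_le_mul_Lam_add n v) (-ε)
  simpa using Lam_le_mul_Lam_add (n + v) (-v)

theorem Asymptotics.IsBigO.comp_add_Lam_rpow_neg {E : Type*} [Norm E] {ε : ℝ}
    {g : ℤ × ℤ → E} (h : g =O[⊤] fun n => Lam n ^ (-ε)) (v : ℤ × ℤ) :
    (fun n => g (n + v)) =O[⊤] fun n => Lam n ^ (-ε) :=
  (h.comp_tendsto tendsto_top).trans (isBigO_Lam_rpow_neg_comp_add ε v)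

theorem exists_tsum_weighted_sq_le_of_shift_sum {G ι R : Type*} [AddGroup G] [Fintype ι]
    [SeminormedRing R] (w : G → ℝ) (hw : ∀ n, 0 ≤ w n) (c : ι → G → R) (v : ι → G)
    (hc : ∀ i, ∃ M, ∀ n, w n * ‖c i n‖ ≤ M) :
    ∃ C > 0, ∀ f : G → R, Summable (fun n => ‖f n‖ ^ 2) →
      ∑' n, w n ^ 2 * ‖∑ i, c i n * f (n + v i)‖ ^ 2 ≤ C * ∑' n, ‖f n‖ ^ 2 := by
  choose M hM using hc
  set K := (Fintype.card ι : ℝ) * ∑ i, M i ^ 2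
  refine ⟨K + 1, by positivity, fun f hf => ?_⟩
  have hshift (i : ι) : Summable fun n => ‖f (n + v i)‖ ^ 2 :=
    hf.comp_injective (add_left_injective (v i))
  have hpt (n : G) : w n ^ 2 * ‖∑ i, c i n * f (n + v i)‖ ^ 2
      ≤ Fintype.card ι * ∑ i, M i ^ 2 * ‖f (n + v i)‖ ^ 2 := by
    have hlin : w n * ‖∑ i, c i n * f (n + v i)‖ ≤ ∑ i, M i * ‖f (n + v i)‖ :=
      calc w n * ‖∑ i, c i n * f (n + v i)‖ ≤ w n * ∑ i, ‖c i n‖ * ‖f (n + v i)‖ :=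
            mul_le_mul_of_nonneg_left ((norm_sum_le _ _).trans
              (Finset.sum_le_sum fun i _ => norm_mul_le _ _)) (hw n)
        _ = ∑ i, w n * ‖c i n‖ * ‖f (n + v i)‖ := by simp only [Finset.mul_sum, mul_assoc]
        _ ≤ ∑ i, M i * ‖f (n + v i)‖ :=
            Finset.sum_le_sum fun i _ => mul_le_mul_of_nonneg_right (hM i n) (norm_nonneg _)
    calc w n ^ 2 * ‖∑ i, c i n * f (n + v i)‖ ^ 2 = (w n * ‖∑ i, c i n * f (n + v i)‖) ^ 2 := by
          ring
      _ ≤ (∑ i, M i * ‖f (n + v i)‖) ^ 2 := pow_le_pow_left₀ (by positivity [hw n]) hlin 2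
      _ ≤ Fintype.card ι * ∑ i, (M i * ‖f (n + v i)‖) ^ 2 := sq_sum_le_card_mul_sum_sq
      _ = Fintype.card ι * ∑ i, M i ^ 2 * ‖f (n + v i)‖ ^ 2 := by simp only [mul_pow]
  have hdom : Summable fun n => Fintype.card ι * ∑ i, M i ^ 2 * ‖f (n + v i)‖ ^ 2 :=
    (summable_sum fun i _ => (hshift i).mul_left _).mul_left _
  calc ∑' n, w n ^ 2 * ‖∑ i, c i n * f (n + v i)‖ ^ 2
      ≤ ∑' n, Fintype.card ι * ∑ i, M i ^ 2 * ‖f (n + v i)‖ ^ 2 :=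
        (hdom.of_nonneg_of_le (fun n => by positivity) hpt).tsum_le_tsum hpt hdom
    _ = K * ∑' n, ‖f n‖ ^ 2 := by
        rw [tsum_mul_left, Summable.tsum_finsetSum fun i _ => (hshift i).mul_left _, mul_assoc,
          Finset.sum_mul]
        congr 2 with i
        rw [tsum_mul_left]
        exact congrArg _ ((Equiv.addRight (v i)).tsum_eq fun n => ‖f n‖ ^ 2)
    _ ≤ (K + 1) * ∑' n, ‖f n‖ ^ 2 :=
        mul_le_mul_of_nonneg_right (le_add_of_nonneg_right zero_le_one)
          (tsum_nonneg fun n => by positivity)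

def triNbr : Fin 6 → ℤ × ℤ := ![(1, 0), (-1, 0), (0, 1), (0, -1), (1, -1), (-1, 1)]

def dirCoord : Fin 6 → ℤ × ℤ →+ ℤ :=
  ![AddMonoidHom.fst ℤ ℤ, -AddMonoidHom.fst ℤ ℤ, AddMonoidHom.snd ℤ ℤ, -AddMonoidHom.snd ℤ ℤ,
    AddMonoidHom.fst ℤ ℤ - AddMonoidHom.snd ℤ ℤ, -(AddMonoidHom.fst ℤ ℤ - AddMonoidHom.snd ℤ ℤ)]

def opACoeff (j : Fin 6) (n : ℤ × ℤ) : ℝ := (dirCoord j (n + (n + triNbr j)) : ℝ) / 2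

lemma opACoeff_eq (j : Fin 6) (n : ℤ × ℤ) :
    opACoeff j n = dirCoord j n + (dirCoord j (triNbr j) : ℝ) / 2 := by
  simp only [opACoeff, map_add, Int.cast_add]
  ring

lemma opACoeff_add_sub (j : Fin 6) (n v : ℤ × ℤ) :
    opACoeff j (n + v) - opACoeff j n = dirCoord j v := by
  simp only [opACoeff_eq, map_add, Int.cast_add]
  ring

lemma abs_dirCoord_triNbr_self_le (j : Fin 6) : |(dirCoord j (triNbr j) : ℝ)| ≤ 2 := by
  fin_cases j <;> norm_num [dirCoord, triNbr]

lemma opA_eq_sum (f : ℤ × ℤ → ℂ) (n : ℤ × ℤ) :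
    opA f n = Complex.I / 6 * ∑ j, (opACoeff j n : ℂ) * f (n + triNbr j) := by
  obtain ⟨n₁, n₂⟩ := n
  simp only [opA, opACoeff_eq, Fin.sum_univ_six, dirCoord, triNbr, Matrix.cons_val,
    Prod.mk_add_mk, AddMonoidHom.neg_apply, AddMonoidHom.add_apply, AddMonoidHom.coe_fst,
    AddMonoidHom.coe_snd, add_zero, sub_eq_add_neg]
  push_cast
  ring

lemma abs_opACoeff_le (j : Fin 6) (n : ℤ × ℤ) : |opACoeff j n| ≤ 3 * jap (dirCoord j n) := by
  have hd := abs_dirCoord_triNbr_self_le j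
  rw [opACoeff_eq]
  calc |(dirCoord j n : ℝ) + (dirCoord j (triNbr j) : ℝ) / 2|
      ≤ |(dirCoord j n : ℝ)| + |(dirCoord j (triNbr j) : ℝ)| / 2 := by
        simpa [abs_div] using abs_add_le (dirCoord j n : ℝ) ((dirCoord j (triNbr j) : ℝ) / 2)
    _ ≤ 3 * jap (dirCoord j n) := by
        linarith [abs_le_jap (dirCoord j n), half_le_jap (dirCoord j n)]

lemma opACoeff_isBigO_jap (j : Fin 6) (v : ℤ × ℤ) :
    (fun n => opACoeff j n) =O[⊤] fun n => jap (dirCoord j (n + v)) :=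
  IsBigO.of_bound (3 * (1 + 2 * |(dirCoord j v : ℝ)|)) <| Eventually.of_forall fun n => by
    have h := jap_le_mul_jap (dirCoord j n) (dirCoord j (n + v))
    simp only [map_add, Int.cast_add, sub_add_cancel_left, abs_neg] at h
    rw [Real.norm_eq_abs, Real.norm_of_nonneg (jap_pos _).le, map_add, Int.cast_add, mul_assoc]
    exact (abs_opACoeff_le j n).trans (by linarith)

def invSqrtMass (η : ℤ × ℤ → ℝ) (n : ℤ × ℤ) : ℝ := (√(1 + η n))⁻¹

def bondDefect (η : ℤ × ℤ → ℝ) (a b : ℤ × ℤ) : ℝ := 1 - invSqrtMass η a * invSqrtMass η b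

def commCoeff (η : ℤ × ℤ → ℝ) (i j : Fin 6) (n : ℤ × ℤ) : ℝ :=
  bondDefect η n (n + triNbr i) * opACoeff j (n + triNbr i)
    - opACoeff j n * bondDefect η (n + triNbr j) (n + triNbr i + triNbr j)

lemma lapT_sub_lapPert (η : ℤ × ℤ → ℝ) (f : ℤ × ℤ → ℂ) (n : ℤ × ℤ) :
    lapT f n - lapPert (fun k => 1 + η k) f n
      = 1 / 6 * ∑ i, (bondDefect η n (n + triNbr i) : ℂ) * f (n + triNbr i) := by
  obtain ⟨n₁, n₂⟩ := n
  simp only [lapT, lapPert, bondDefect, invSqrtMass, Fin.sum_univ_six, triNbr, Matrix.cons_val,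
    Prod.mk_add_mk, add_zero, sub_eq_add_neg, div_eq_mul_inv]
  push_cast
  ring

lemma commutator_eq_sum (η : ℤ × ℤ → ℝ) (f : ℤ × ℤ → ℂ) (n : ℤ × ℤ) :
    (lapT (opA f) n - lapPert (fun k => 1 + η k) (opA f) n)
        - opA (fun k => lapT f k - lapPert (fun j => 1 + η j) f k) n
      = ∑ p : Fin 6 × Fin 6,
          Complex.I / 36 * (commCoeff η p.1 p.2 n : ℂ) * f (n + (triNbr p.1 + triNbr p.2)) := by
  simp only [lapT_sub_lapPert, opA_eq_sum, Finset.mul_sum]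
  conv_lhs => arg 2; rw [Finset.sum_comm]
  rw [← Finset.sum_sub_distrib, Fintype.sum_prod_type]
  refine Finset.sum_congr rfl fun i _ => ?_
  rw [← Finset.sum_sub_distrib]
  refine Finset.sum_congr rfl fun j _ => ?_
  rw [add_right_comm n (triNbr j) (triNbr i), ← add_assoc]
  push_cast [commCoeff]
  ring

lemma abs_inv_sqrt_sub_inv_sqrt_le {δ x y : ℝ} (hδ : 0 < δ) (hx : δ ≤ x) (hy : δ ≤ y) :
    |(√x)⁻¹ - (√y)⁻¹| ≤ (δ * √δ)⁻¹ * |x - y| := by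
  have hδx : √δ ≤ √x := Real.sqrt_le_sqrt hx
  have hδy : √δ ≤ √y := Real.sqrt_le_sqrt hy
  have hsδ : 0 < √δ := Real.sqrt_pos.2 hδ
  have hsx : 0 < √x := hsδ.trans_le hδx
  have hsy : 0 < √y := hsδ.trans_le hδy
  have hden : δ * √δ ≤ √x * √y * (√x + √y) := by
    have hxy : δ ≤ √x * √y := by nlinarith [Real.mul_self_sqrt hδ.le]
    nlinarith [mul_le_mul hxy (by linarith : √δ ≤ √x + √y) hsδ.le (by positivity)]
  have hpos : 0 < √x * √y * (√x + √y) := by positivity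
  have key : (√x)⁻¹ - (√y)⁻¹ = (y - x) / (√x * √y * (√x + √y)) := by
    rw [show y - x = √y ^ 2 - √x ^ 2 by
      rw [Real.sq_sqrt (hδ.le.trans hx), Real.sq_sqrt (hδ.le.trans hy)]]
    field_simp
    ring
  rw [key, abs_div, abs_of_pos hpos, abs_sub_comm, div_eq_inv_mul]
  exact mul_le_mul_of_nonneg_right (inv_anti₀ (by positivity) hden) (abs_nonneg _)

section InvSqrtMass

variable {η : ℤ × ℤ → ℝ} {c : ℝ} {α : Type*}

lemma isBigO_invSqrtMass_sub (hc : -1 < c) (hη : ∀ n, c ≤ η n) (a b : α → ℤ × ℤ) :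
    (fun x => invSqrtMass η (a x) - invSqrtMass η (b x)) =O[⊤]
      fun x => η (a x) - η (b x) :=
  IsBigO.of_bound _ <| Eventually.of_forall fun x => by
    simpa [invSqrtMass] using abs_inv_sqrt_sub_inv_sqrt_le (δ := 1 + c)
      (x := 1 + η (a x)) (y := 1 + η (b x)) (by linarith)
      (by linarith [hη (a x)]) (by linarith [hη (b x)])

lemma isBigO_one_sub_invSqrtMass (hc : -1 < c) (hη : ∀ n, c ≤ η n) (a : α → ℤ × ℤ) :
    (fun x => 1 - invSqrtMass η (a x)) =O[⊤] fun x => η (a x) :=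
  IsBigO.of_bound _ <| Eventually.of_forall fun x => by
    simpa [invSqrtMass] using abs_inv_sqrt_sub_inv_sqrt_le (δ := 1 + min c 0) (x := 1)
      (y := 1 + η (a x))
      (by linarith [lt_min hc neg_one_lt_zero]) (by linarith [min_le_right c 0])
      (by linarith [hη (a x), min_le_left c 0])

lemma isBigO_invSqrtMass_one (hc : -1 < c) (hη : ∀ n, c ≤ η n) (a : α → ℤ × ℤ) :
    (fun x => invSqrtMass η (a x)) =O[⊤] fun _ => (1 : ℝ) :=
  IsBigO.of_bound (√(1 + c))⁻¹ <| Eventually.of_forall fun x => by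
    have hc' : 0 < √(1 + c) := Real.sqrt_pos.2 (by linarith)
    simpa [invSqrtMass, abs_of_nonneg (Real.sqrt_nonneg _)] using
      inv_anti₀ hc' (Real.sqrt_le_sqrt (by linarith [hη (a x)] : 1 + c ≤ 1 + η (a x)))

end InvSqrtMass

section Decay

variable {ε : ℝ} {η : ℤ × ℤ → ℝ} {c : ℝ}

lemma bondDefect_isBigO (hc : -1 < c) (hη : ∀ n, c ≤ η n)
    (h4 : η =O[⊤] fun n => Lam n ^ (-ε)) (v : ℤ × ℤ) :
    (fun n => bondDefect η n (n + v)) =O[⊤] fun n => Lam n ^ (-ε) := by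
  have hsplit : (fun n => bondDefect η n (n + v)) = fun n =>
      (1 - invSqrtMass η n) * invSqrtMass η (n + v) + (1 - invSqrtMass η (n + v)) := by
    funext n; simp only [bondDefect]; ring
  rw [hsplit]
  refine IsBigO.add ?_
    ((isBigO_one_sub_invSqrtMass hc hη (· + v)).trans (h4.comp_add_Lam_rpow_neg v))
  simpa only [mul_one] using ((isBigO_one_sub_invSqrtMass hc hη fun n => n).trans h4).mul
    (isBigO_invSqrtMass_one hc hη (· + v))

def weightedJump (η : ℤ × ℤ → ℝ) (j : Fin 6) (n : ℤ × ℤ) : ℝ :=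
  jap (dirCoord j n) * (η (n + triNbr j) - η n)

lemma weightedJump_isBigO_of_bound {j : Fin 6}
    (h : ∃ C, ∀ n, Lam n ^ ε * jap (dirCoord j n) * |η n - η (n + triNbr j)| ≤ C) :
    weightedJump η j =O[⊤] fun n => Lam n ^ (-ε) := by
  refine isBigO_Lam_rpow_neg_iff.2 (h.imp fun C hC n => ?_)
  rw [weightedJump, norm_mul, Real.norm_of_nonneg (jap_pos _).le, Real.norm_eq_abs, abs_sub_comm,
    ← mul_assoc]
  exact hC n

lemma weightedJump_isBigO_of_neg {j k : Fin 6} (hv : triNbr j = -triNbr k)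
    (hd : dirCoord j = -dirCoord k) (h : weightedJump η k =O[⊤] fun n => Lam n ^ (-ε)) :
    weightedJump η j =O[⊤] fun n => Lam n ^ (-ε) := by
  refine IsBigO.trans ?_ (h.comp_add_Lam_rpow_neg (triNbr j))
  refine IsBigO.of_bound (1 + 2 * |(dirCoord k (triNbr j) : ℝ)|) (Eventually.of_forall fun n => ?_)
  have hjap := jap_le_mul_jap (dirCoord k n) (dirCoord k (n + triNbr j))
  simp only [map_add, Int.cast_add, sub_add_cancel_left, abs_neg] at hjap
  have hback : n + triNbr j + triNbr k = n := by rw [hv, neg_add_cancel_right]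
  simp only [weightedJump, hback, hd, AddMonoidHom.neg_apply, Int.cast_neg, jap_neg, norm_mul,
    Real.norm_of_nonneg (jap_pos _).le, Real.norm_eq_abs, abs_sub_comm (η n), map_add, Int.cast_add]
  rw [← mul_assoc]
  exact mul_le_mul_of_nonneg_right hjap (abs_nonneg _)

lemma weightedJump_isBigO
    (h1 : ∃ C : ℝ, ∀ n : ℤ × ℤ,
      Lam n ^ ε * jap (n.1 : ℝ) * |η n - η (n.1 + 1, n.2)| ≤ C)
    (h2 : ∃ C : ℝ, ∀ n : ℤ × ℤ,
      Lam n ^ ε * jap (n.2 : ℝ) * |η n - η (n.1, n.2 + 1)| ≤ C)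
    (h3 : ∃ C : ℝ, ∀ n : ℤ × ℤ,
      Lam n ^ ε * jap ((n.1 : ℝ) - (n.2 : ℝ)) * |η n - η (n.1 + 1, n.2 - 1)| ≤ C)
    (j : Fin 6) : weightedJump η j =O[⊤] fun n => Lam n ^ (-ε) := by
  have hj0 : weightedJump η 0 =O[⊤] fun n => Lam n ^ (-ε) :=
    weightedJump_isBigO_of_bound (by simpa [dirCoord, triNbr, Prod.add_def] using h1)
  have hj2 : weightedJump η 2 =O[⊤] fun n => Lam n ^ (-ε) :=
    weightedJump_isBigO_of_bound (by simpa [dirCoord, triNbr, Prod.add_def] using h2)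
  have hj4 : weightedJump η 4 =O[⊤] fun n => Lam n ^ (-ε) :=
    weightedJump_isBigO_of_bound
      (by simpa [dirCoord, triNbr, Prod.add_def, sub_eq_add_neg] using h3)
  fin_cases j
  exacts [hj0, weightedJump_isBigO_of_neg (by decide) rfl hj0,
    hj2, weightedJump_isBigO_of_neg (by decide) rfl hj2,
    hj4, weightedJump_isBigO_of_neg (by decide) rfl hj4]

lemma commCoeff_isBigO (hc : -1 < c) (hη : ∀ n, c ≤ η n)
    (h4 : η =O[⊤] fun n => Lam n ^ (-ε))
    (hJ : ∀ j, weightedJump η j =O[⊤] fun n => Lam n ^ (-ε)) (i j : Fin 6) :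
    (fun n => commCoeff η i j n) =O[⊤] fun n => Lam n ^ (-ε) := by
  set u := triNbr i
  set v := triNbr j
  have hsplit : (fun n => commCoeff η i j n) = fun n =>
      (dirCoord j u : ℝ) * bondDefect η n (n + u)
        + opACoeff j n * (invSqrtMass η (n + v) - invSqrtMass η n) * invSqrtMass η (n + u + v)
        + opACoeff j n * (invSqrtMass η (n + u + v) - invSqrtMass η (n + u))
          * invSqrtMass η n := by
    funext n
    rw [← opACoeff_add_sub j n u]
    simp only [commCoeff, bondDefect]
    ring
  have hA : (fun n => opACoeff j n) =O[⊤] fun n => jap (dirCoord j n) := by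
    simpa using opACoeff_isBigO_jap j 0
  have hnear := ((hA.mul (isBigO_invSqrtMass_sub hc hη (· + v) fun n => n)).trans (hJ j)).mul
    (isBigO_invSqrtMass_one hc hη (· + u + v))
  have hfar := ((opACoeff_isBigO_jap j u).mul (isBigO_invSqrtMass_sub hc hη (· + u + v) (· + u))
    |>.trans ((hJ j).comp_add_Lam_rpow_neg u)).mul (isBigO_invSqrtMass_one hc hη fun n => n)
  rw [hsplit]
  simp only [mul_one] at hnear hfar
  exact (((bondDefect_isBigO hc hη h4 u).const_mul_left _).add hnear).add hfar

end Decay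

theorem weighted_commutator_metric_bounded_general (ε : ℝ) (η : ℤ × ℤ → ℝ)
    (h0inf : ∃ c : ℝ, -1 < c ∧ ∀ n : ℤ × ℤ, c ≤ η n)
    (h1 : ∃ C : ℝ, ∀ n : ℤ × ℤ,
      Lam n ^ ε * jap (n.1 : ℝ) * |η n - η (n.1 + 1, n.2)| ≤ C)
    (h2 : ∃ C : ℝ, ∀ n : ℤ × ℤ,
      Lam n ^ ε * jap (n.2 : ℝ) * |η n - η (n.1, n.2 + 1)| ≤ C)
    (h3 : ∃ C : ℝ, ∀ n : ℤ × ℤ,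
      Lam n ^ ε * jap ((n.1 : ℝ) - (n.2 : ℝ)) * |η n - η (n.1 + 1, n.2 - 1)| ≤ C)
    (h4 : ∃ C : ℝ, ∀ n : ℤ × ℤ, Lam n ^ ε * |η n| ≤ C) :
    ∃ c > 0, ∀ f : ℤ × ℤ → ℂ, (Function.support f).Finite →
      ∑' n : ℤ × ℤ, Lam n ^ (2 * ε) *
          ‖(lapT (opA f) n - lapPert (fun k => 1 + η k) (opA f) n)
            - opA (fun k => lapT f k - lapPert (fun j => 1 + η j) f k) n‖ ^ 2
        ≤ c * ∑' n : ℤ × ℤ, ‖f n‖ ^ 2 := by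
  obtain ⟨c, hc, hη⟩ := h0inf
  have hη4 : η =O[⊤] fun n => Lam n ^ (-ε) := isBigO_Lam_rpow_neg_iff.2 h4
  have hcoeff (p : Fin 6 × Fin 6) : ∃ M, ∀ n,
      Lam n ^ ε * ‖Complex.I / 36 * (commCoeff η p.1 p.2 n : ℂ)‖ ≤ M := by
    obtain ⟨M, hM⟩ := isBigO_Lam_rpow_neg_iff.1
      (commCoeff_isBigO hc hη hη4 (weightedJump_isBigO h1 h2 h3) p.1 p.2)
    refine ⟨M / 36, fun n => ?_⟩
    rw [norm_mul, Complex.norm_real, norm_div, Complex.norm_I, Complex.norm_ofNat,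
      one_div_mul_eq_div, mul_div_assoc']
    exact div_le_div_of_nonneg_right (hM n) (by norm_num)
  obtain ⟨C, hC, hbound⟩ := exists_tsum_weighted_sq_le_of_shift_sum (fun n => Lam n ^ ε)
    (fun n => (Real.rpow_pos_of_pos (Lam_pos n) ε).le) _ (fun p => triNbr p.1 + triNbr p.2) hcoeff
  refine ⟨C, hC, fun f hf => ?_⟩
  have hf2 : Summable fun n => ‖f n‖ ^ 2 :=
    summable_of_hasFiniteSupport (hf.subset fun n hn h => hn (by simp [h]))
  have hpow (n : ℤ × ℤ) : Lam n ^ (2 * ε) = (Lam n ^ ε) ^ 2 := by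
    rw [mul_comm, Real.rpow_mul (Lam_pos n).le, Real.rpow_two]
  simp_rw [hpow, commutator_eq_sum]
  exact hbound f hf2

/-- under `(H₀)-(H₄)`, `Λ^ε(Q)[Δ_T - Δ̃, A]` extends to a bounded operator. -/
theorem weighted_commutator_metric_bounded (ε : ℝ) (hε : 0 < ε) (η : ℤ × ℤ → ℝ)
    (h0inf : ∃ c : ℝ, -1 < c ∧ ∀ n : ℤ × ℤ, c ≤ η n)
    (h0lim : Filter.Tendsto η Filter.cofinite (nhds 0))
    (h1 : ∃ C : ℝ, ∀ n : ℤ × ℤ,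
      Lam n ^ ε * jap (n.1 : ℝ) * |η n - η (n.1 + 1, n.2)| ≤ C)
    (h2 : ∃ C : ℝ, ∀ n : ℤ × ℤ,
      Lam n ^ ε * jap (n.2 : ℝ) * |η n - η (n.1, n.2 + 1)| ≤ C)
    (h3 : ∃ C : ℝ, ∀ n : ℤ × ℤ,
      Lam n ^ ε * jap ((n.1 : ℝ) - (n.2 : ℝ)) * |η n - η (n.1 + 1, n.2 - 1)| ≤ C)
    (h4 : ∃ C : ℝ, ∀ n : ℤ × ℤ, Lam n ^ ε * |η n| ≤ C) :
    ∃ c > 0, ∀ f : ℤ × ℤ → ℂ, (Function.support f).Finite →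
      ∑' n : ℤ × ℤ, Lam n ^ (2 * ε) *
          ‖(lapT (opA f) n - lapPert (fun k => 1 + η k) (opA f) n)
            - opA (fun k => lapT f k - lapPert (fun j => 1 + η j) f k) n‖ ^ 2
        ≤ c * ∑' n : ℤ × ℤ, ‖f n‖ ^ 2 :=
  weighted_commutator_metric_bounded_general ε η h0inf h1 h2 h3 h4
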